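/- Let μ₀ be a probability measure on [−1,1], Θ = [−1,1]^{ℤ²} with the product σ-algebra and product probability measure ℙ = ⊗_{ℤ²} μ₀, 𝔼 the expectation with respect to ℙ, and for γ ∈ ℤ² let T(γ) : Θ → Θ be the shift (T(γ)ω)_{γ'} = ω_{γ'+γ}. Let (A_ω)_{ω∈Θ}, (B_ω)_{ω∈Θ} be families of kernels A_ω, B_ω : ℝ² × ℝ² → ℂ, jointly measurable in (ω,x,y), jointly continuous in (x,y) off the diagonal, and satisfying, uniformly in ω, |A_ω(x,y)| ≤ C (1 + |ln ‖x−y‖|) e^{−δ‖x−y‖} and |B_ω(x,y)| ≤ C (1 + ‖x−y‖^{−1}) e^{−δ‖x−y‖} for some C, δ > 0 and all x ≠ y. Assume that for every γ ∈ ℤ² and all x, y ∈ ℝ², A_ω(x−γ, y−γ) B_ω(y−γ, x−γ) = A_{T(γ)ω}(x,y) B_{T(γ)ω}(y,x). Then, with Ω = [0,1]², the integrals below are absolutely convergent and 𝔼( ∫_Ω dx ∫_{ℝ²} dy A_ω(x,y) B_ω(y,x) ) = 𝔼( ∫_Ω dx ∫_{ℝ²} dy B_ω(x,y) A_ω(y,x)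 ). -/

import Mathlib

open MeasureTheory Filter Set

noncomputable section

/-- The disorder configuration space `Θ = [−1,1]^{ℤ²}`, with the product σ-algebra. -/
abbrev DisorderSpace : Type := (ℤ × ℤ) → Set.Icc (-1 : ℝ) 1

/-- The shift `(T(γ)ω)_{γ'} = ω_{γ'+γ}`. -/
def disorderShift (γ : ℤ × ℤ) (ω : DisorderSpace) : DisorderSpace :=
  fun γ' => ω (γ' + γ)

/-- The Euclidean norm on `ℝ²` realized as `ℝ × ℝ`. -/
def eNorm2 (x : ℝ × ℝ) : ℝ := Real.sqrt (x.1 ^ 2 + x.2 ^ 2)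

/-- Embedding of the lattice `ℤ²` into `ℝ²`. -/
def latR2 (γ : ℤ × ℤ) : ℝ × ℝ := ((γ.1 : ℝ), (γ.2 : ℝ))

/-!
Both sides are integrals of `F(ω, x, y) = A_ω(x, y) B_ω(y, x)` over `Θ × ℝ² × ℝ²` with respect
to `ℙ ⊗ dx ⊗ dy`: the left side over `Θ × Ω × ℝ²`, the right side, after exchanging `x` and `y`,
over `Θ × ℝ² × Ω`. The product of the two kernel bounds is `C² f(‖x - y‖)` with
`∫₀^∞ r f(r) dr < ∞`, which makes `F` integrable over either set, so both sides are these integrals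
by Fubini. Covariance says that `F` is invariant under the diagonal action
`γ • (ω, x, y) = (T(γ)ω, x + γ, y + γ)` of `ℤ²`, which preserves `ℙ ⊗ dx ⊗ dy`, and both sets
are fundamental domains of this action; integrals of an invariant function over two fundamental
domains agree.
-/

instance Prod.instMeasurableConstVAdd {M α β : Type*} [VAdd M α] [VAdd M β] [MeasurableSpace α]
    [MeasurableSpace β] [MeasurableConstVAdd M α] [MeasurableConstVAdd M β] :
    MeasurableConstVAdd M (α × β) :=
  ⟨fun c => (measurable_const_vadd c).prodMap (measurable_const_vadd c)⟩

instance Prod.instVAddInvariantMeasure {M α β : Type*} [VAdd M α] [VAdd M β] [MeasurableSpace α]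
    [MeasurableSpace β] [MeasurableConstVAdd M α] [MeasurableConstVAdd M β]
    (μ : Measure α) (ν : Measure β) [SFinite μ] [SFinite ν]
    [VAddInvariantMeasure M α μ] [VAddInvariantMeasure M β ν] :
    VAddInvariantMeasure M (α × β) (μ.prod ν) :=
  ⟨fun c _ hs => ((measurePreserving_vadd c μ).prod (measurePreserving_vadd c ν)).measure_preimage
    hs.nullMeasurableSet⟩

lemma measurePreserving_comp_equiv_infinitePi {ι X : Type*} [MeasurableSpace X] (ν : Measure X)
    [IsProbabilityMeasure ν] (e : ι ≃ ι) :
    MeasurePreserving (fun ω : ι → X => ω ∘ e) (Measure.infinitePi fun _ => ν)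
      (Measure.infinitePi fun _ => ν) := by
  have h := Measure.infinitePi_map_piCongrLeft (fun _ : ι => ν) e.symm
  refine ⟨measurable_pi_lambda _ fun i => measurable_pi_apply (e i), ?_⟩
  convert h using 2
  ext ω i
  simp [MeasurableEquiv.coe_piCongrLeft, Equiv.piCongrLeft_apply_eq_cast]

lemma ae_prod_fst_ne_snd {α : Type*} [MeasurableSpace α] [MeasurableEq α]
    (ν μ : Measure α) [SFinite μ] [NullSingletonClass μ] : ∀ᵐ q ∂ν.prod μ, q.1 ≠ q.2 := by
  simp only [ae_iff, ne_eq, not_not]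
  rw [Measure.prod_apply (measurableSet_eq_fun measurable_fst measurable_snd)]
  simp

lemma setIntegral_univ_prod_univ_prod_eq_swap {Θ G E : Type*} [MeasurableSpace Θ]
    [MeasurableSpace G] [NormedAddCommGroup E] [NormedSpace ℝ E] (P : Measure Θ) [SFinite P]
    (μ : Measure G) [SFinite μ] (s : Set G) (f : Θ × G × G → E) :
    ∫ p in univ ×ˢ (univ ×ˢ s), f p ∂P.prod (μ.prod μ)
      = ∫ p in univ ×ˢ (s ×ˢ univ), f (p.1, p.2.2, p.2.1) ∂P.prod (μ.prod μ) := by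
  let e : Θ × G × G ≃ᵐ Θ × G × G := (MeasurableEquiv.refl Θ).prodCongr .prodComm
  have he : MeasurePreserving e (P.prod (μ.prod μ)) (P.prod (μ.prod μ)) :=
    (MeasurePreserving.id P).prod Measure.measurePreserving_swap
  have hpre : e ⁻¹' (univ ×ˢ (univ ×ˢ s)) = univ ×ˢ (s ×ˢ univ) := by
    ext p
    simp [e, MeasurableEquiv.prodCongr, MeasurableEquiv.prodComm]
  rw [← he.setIntegral_preimage_emb e.measurableEmbedding, hpre]
  rfl

lemma stronglyMeasurable_mul_apply_swap {Θ G : Type*} [MeasurableSpace Θ]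
    [MeasurableSpace G] {A B : Θ → G → G → ℂ}
    (hA : Measurable (fun p : Θ × G × G => A p.1 p.2.1 p.2.2))
    (hB : Measurable (fun p : Θ × G × G => B p.1 p.2.1 p.2.2)) :
    StronglyMeasurable (fun p : Θ × G × G => A p.1 p.2.1 p.2.2 * B p.1 p.2.2 p.2.1) :=
  (hA.mul (hB.comp (measurable_fst.prodMk (measurable_snd.snd.prodMk measurable_snd.fst))))
    |>.stronglyMeasurable

section KernelIntegrability

variable {G : Type*} [AddGroup G] [MeasurableSpace G] [MeasurableAdd₂ G] [MeasurableNeg G]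
  {μ : Measure G} [SFinite μ] [μ.IsAddLeftInvariant] [μ.IsNegInvariant]

lemma integrableOn_prod_univ_comp_sub {K : G → ℝ} (hK : Integrable K μ) {s : Set G}
    (hs : μ s ≠ ⊤) : IntegrableOn (fun q : G × G => K (q.1 - q.2)) (s ×ˢ univ) (μ.prod μ) := by
  rw [IntegrableOn, ← Measure.restrict_prod_eq_prod_univ]
  have hm : AEStronglyMeasurable (fun q : G × G => K (q.1 - q.2)) ((μ.restrict s).prod μ) :=
    hK.aestronglyMeasurable.comp_quasiMeasurePreserving
      ((quasiMeasurePreserving_sub μ μ).mono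
        (Measure.AbsolutelyContinuous.prod Measure.restrict_le_self.absolutelyContinuous
          Measure.AbsolutelyContinuous.rfl) Measure.AbsolutelyContinuous.rfl)
  refine (integrable_prod_iff hm).2 ⟨Eventually.of_forall fun x => hK.comp_sub_left x, ?_⟩
  simp only [integral_sub_left_eq_self (fun z => ‖K z‖) μ]
  exact integrableOn_const hs enorm_ne_top

variable [MeasurableEq G] [NullSingletonClass μ] {Θ E : Type*} [MeasurableSpace Θ]
  [NormedAddCommGroup E] {P : Measure Θ} [IsFiniteMeasure P]
  {H : Θ → G → G → E} {K : G → ℝ} {s : Set G}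

lemma integrableOn_prod_univ_of_norm_le_comp_sub
    (hH : StronglyMeasurable (fun p : Θ × G × G => H p.1 p.2.1 p.2.2)) (hK : Integrable K μ)
    (hs : μ s ≠ ⊤) (hHK : ∀ ω x y, x ≠ y → ‖H ω x y‖ ≤ K (x - y)) (ω : Θ) :
    IntegrableOn (fun q : G × G => H ω q.1 q.2) (s ×ˢ univ) (μ.prod μ) :=
  (integrableOn_prod_univ_comp_sub hK hs).mono'
    (hH.comp_measurable measurable_prodMk_left).aestronglyMeasurable
    ((ae_restrict_of_ae (ae_prod_fst_ne_snd μ μ)).mono fun q hq => hHK ω q.1 q.2 hq)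

lemma integral_setIntegral_integral_eq_setIntegral_prod [NormedSpace ℝ E]
    (hH : StronglyMeasurable (fun p : Θ × G × G => H p.1 p.2.1 p.2.2)) (hK : Integrable K μ)
    (hs : μ s ≠ ⊤) (hHK : ∀ ω x y, x ≠ y → ‖H ω x y‖ ≤ K (x - y)) :
    ∫ ω, (∫ x in s, ∫ y, H ω x y ∂μ ∂μ) ∂P
      = ∫ p in univ ×ˢ (s ×ˢ univ), H p.1 p.2.1 p.2.2 ∂P.prod (μ.prod μ) := by
  have hint : Integrable (fun p : Θ × G × G => H p.1 p.2.1 p.2.2)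
      (P.prod ((μ.prod μ).restrict (s ×ˢ univ))) :=
    ((integrableOn_prod_univ_comp_sub hK hs).comp_snd P).mono' hH.aestronglyMeasurable
      ((Measure.quasiMeasurePreserving_snd.ae (ae_restrict_of_ae (ae_prod_fst_ne_snd μ μ))).mono
        fun p hp => hHK p.1 p.2.1 p.2.2 hp)
  have hρ : P.prod ((μ.prod μ).restrict (s ×ˢ univ))
      = (P.prod (μ.prod μ)).restrict (univ ×ˢ (s ×ˢ univ)) := by
    rw [← Measure.prod_restrict (univ : Set Θ) (s ×ˢ univ), Measure.restrict_univ]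
  rw [← hρ, integral_prod _ hint]
  refine integral_congr_ae (Eventually.of_forall fun ω => ?_)
  dsimp only
  rw [setIntegral_prod _ (integrableOn_prod_univ_of_norm_le_comp_sub hH hK hs hHK ω),
    Measure.restrict_univ]

end KernelIntegrability

def productKernelBound (δ r : ℝ) : ℝ :=
  (1 + |Real.log r|) * (1 + r⁻¹) * Real.exp (-(2 * δ) * r)

lemma measurable_productKernelBound (δ : ℝ) : Measurable (productKernelBound δ) := by
  unfold productKernelBound; fun_prop

lemma productKernelBound_nonneg (δ r : ℝ) (hr : 0 ≤ r) : 0 ≤ productKernelBound δ r := by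
  unfold productKernelBound; positivity

lemma integrableOn_mul_productKernelBound {δ : ℝ} (hδ : 0 < δ) :
    IntegrableOn (fun r => r * productKernelBound δ r) (Ioi 0) := by
  have hmeas : AEStronglyMeasurable (fun r => r * productKernelBound δ r) :=
    (measurable_id.mul (measurable_productKernelBound δ)).aestronglyMeasurable
  rw [← Ioc_union_Ioi_eq_Ioi zero_le_one]
  refine IntegrableOn.union ?_ ?_
  · have hlog : IntegrableOn (fun r => 2 * (1 + |Real.log r|)) (Ioc 0 1) :=
      ((integrableOn_const (by simp)).add
        (intervalIntegral.intervalIntegrable_log'.1.norm)).const_mul 2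
    refine hlog.mono' hmeas.restrict ((ae_restrict_mem measurableSet_Ioc).mono fun r ⟨h0, h1⟩ => ?_)
    rw [Real.norm_eq_abs, abs_of_nonneg (mul_nonneg h0.le (productKernelBound_nonneg δ r h0.le)),
      productKernelBound]
    have hexp : Real.exp (-(2 * δ) * r) ≤ 1 := Real.exp_le_one_iff.2 (by nlinarith)
    calc r * ((1 + |Real.log r|) * (1 + r⁻¹) * Real.exp (-(2 * δ) * r))
        = (1 + |Real.log r|) * (r + 1) * Real.exp (-(2 * δ) * r) := by field_simp
      _ ≤ (1 + |Real.log r|) * 2 * 1 := by gcongr; linarith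
      _ = 2 * (1 + |Real.log r|) := by ring
  · have hexp : IntegrableOn (fun r : ℝ => 2 * (r ^ (2 : ℝ) * Real.exp (-(2 * δ) * r ^ (1 : ℝ))))
        (Ioi 1) :=
      ((integrableOn_rpow_mul_exp_neg_mul_rpow (by norm_num) one_pos (by positivity)).mono_set
        (Ioi_subset_Ioi zero_le_one)).const_mul 2
    refine hexp.mono' hmeas.restrict ((ae_restrict_mem measurableSet_Ioi).mono fun r hr => ?_)
    have h0 : (0 : ℝ) < r := zero_lt_one.trans hr
    rw [Real.norm_eq_abs, abs_of_nonneg (mul_nonneg h0.le (productKernelBound_nonneg δ r h0.le)),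
      productKernelBound, Real.rpow_one, Real.rpow_two,
      abs_of_nonneg (Real.log_nonneg (le_of_lt hr))]
    have hlog : 1 + Real.log r ≤ r := by linarith [Real.log_le_sub_one_of_pos h0]
    calc r * ((1 + Real.log r) * (1 + r⁻¹) * Real.exp (-(2 * δ) * r))
        = (1 + Real.log r) * (r + 1) * Real.exp (-(2 * δ) * r) := by field_simp
      _ ≤ r * (2 * r) * Real.exp (-(2 * δ) * r) := by
          gcongr
          linarith [show (1 : ℝ) < r from hr]
      _ = 2 * (r ^ 2 * Real.exp (-(2 * δ) * r)) := by ring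

-- `ℝ × ℝ` carries the sup norm; `eNorm2` is the norm of `EuclideanSpace ℝ (Fin 2)`.
lemma integrable_comp_eNorm2 {f : ℝ → ℝ} (hf : IntegrableOn (fun r => r * f r) (Ioi 0)) :
    Integrable (fun z : ℝ × ℝ => f (eNorm2 z)) := by
  let e := (MeasurableEquiv.toLp 2 (Fin 2 → ℝ)).symm.trans MeasurableEquiv.finTwoArrow
  have he : MeasurePreserving e :=
    (volume_preserving_finTwoArrow ℝ).comp
      (EuclideanSpace.volume_preserving_symm_measurableEquiv_toLp (Fin 2))
  have hnorm : ∀ v : EuclideanSpace ℝ (Fin 2), eNorm2 (e v) = ‖v‖ := fun v => by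
    simp [e, eNorm2, EuclideanSpace.norm_eq, Fin.sum_univ_two]
  rw [← he.integrable_comp_emb e.measurableEmbedding]
  simp only [Function.comp_def, hnorm]
  refine (integrable_fun_norm_addHaar volume).2 ?_
  simpa [finrank_euclideanSpace] using hf

lemma eNorm2_sub_comm (x y : ℝ × ℝ) : eNorm2 (x - y) = eNorm2 (y - x) := by
  simp only [eNorm2, Prod.fst_sub, Prod.snd_sub]
  ring_nf

lemma norm_mul_le_productKernelBound {a b : ℂ} {C δ r : ℝ}
    (ha : ‖a‖ ≤ C * (1 + |Real.log r|) * Real.exp (-δ * r))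
    (hb : ‖b‖ ≤ C * (1 + r⁻¹) * Real.exp (-δ * r)) :
    ‖a * b‖ ≤ C ^ 2 * productKernelBound δ r := by
  calc ‖a * b‖ = ‖a‖ * ‖b‖ := norm_mul a b
    _ ≤ (C * (1 + |Real.log r|) * Real.exp (-δ * r)) * (C * (1 + r⁻¹) * Real.exp (-δ * r)) :=
        mul_le_mul ha hb (norm_nonneg b) ((norm_nonneg a).trans ha)
    _ = C ^ 2 * productKernelBound δ r := by
        rw [productKernelBound, show -(2 * δ) * r = -δ * r + -δ * r by ring, Real.exp_add]
        ring

instance : AddAction (ℤ × ℤ) DisorderSpace where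
  vadd := disorderShift
  zero_vadd ω := funext fun i => congrArg ω (add_zero i)
  add_vadd γ γ' ω := funext fun i => congrArg ω (add_assoc i γ γ').symm

instance : MeasurableConstVAdd (ℤ × ℤ) DisorderSpace :=
  ⟨fun γ => measurable_pi_lambda _ fun γ' => measurable_pi_apply (γ' + γ)⟩

instance (μ0 : Measure (Set.Icc (-1 : ℝ) 1)) [IsProbabilityMeasure μ0] :
    VAddInvariantMeasure (ℤ × ℤ) DisorderSpace (Measure.infinitePi fun _ => μ0) :=
  ⟨fun γ _ hs => (measurePreserving_comp_equiv_infinitePi μ0 (Equiv.addRight γ)).measure_preimage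
    hs.nullMeasurableSet⟩

lemma latR2_add (γ γ' : ℤ × ℤ) : latR2 (γ + γ') = latR2 γ + latR2 γ' := by
  simp [latR2]

instance : AddAction (ℤ × ℤ) (ℝ × ℝ) where
  vadd γ x := latR2 γ + x
  zero_vadd x := show latR2 0 + x = x by simp [latR2]
  add_vadd γ γ' x := show latR2 (γ + γ') + x = latR2 γ + (latR2 γ' + x) by
    rw [latR2_add, add_assoc]

lemma vadd_eq_latR2_add (γ : ℤ × ℤ) (x : ℝ × ℝ) : γ +ᵥ x = latR2 γ + x := rfl

instance : MeasurableConstVAdd (ℤ × ℤ) (ℝ × ℝ) :=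
  ⟨fun γ => measurable_const_add (latR2 γ)⟩

instance : VAddInvariantMeasure (ℤ × ℤ) (ℝ × ℝ) volume :=
  ⟨fun γ s _ => measure_preimage_add volume (latR2 γ) s⟩

def unitCell : Set (ℝ × ℝ) := Ico 0 1 ×ˢ Ico 0 1

lemma intCast_add_mem_Ico_iff (n : ℤ) (r : ℝ) : (n : ℝ) + r ∈ Ico (0 : ℝ) 1 ↔ n = -⌊r⌋ := by
  rw [← Int.floor_eq_zero_iff, Int.floor_intCast_add]
  omega

lemma existsUnique_vadd_mem_unitCell (x : ℝ × ℝ) : ∃! γ : ℤ × ℤ, γ +ᵥ x ∈ unitCell := by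
  simp only [vadd_eq_latR2_add, unitCell, latR2, mem_prod, Prod.fst_add, Prod.snd_add,
    intCast_add_mem_Ico_iff]
  exact ⟨(-⌊x.1⌋, -⌊x.2⌋), ⟨rfl, rfl⟩, fun γ h => Prod.ext h.1 h.2⟩

lemma measurableSet_unitCell : MeasurableSet unitCell := measurableSet_Ico.prod measurableSet_Ico

lemma Icc_prod_Icc_ae_eq_unitCell : Icc (0 : ℝ) 1 ×ˢ Icc (0 : ℝ) 1 =ᵐ[volume] unitCell :=
  (Measure.set_prod_ae_eq Ico_ae_eq_Icc Ico_ae_eq_Icc).symm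

lemma setIntegral_Icc_prod_Icc_eq_unitCell {E : Type*} [NormedAddCommGroup E] [NormedSpace ℝ E]
    (f : ℝ × ℝ → E) : ∫ x in Icc (0 : ℝ) 1 ×ˢ Icc (0 : ℝ) 1, f x = ∫ x in unitCell, f x :=
  setIntegral_congr_set Icc_prod_Icc_ae_eq_unitCell

lemma volume_Icc_prod_Icc_ne_top : volume (Icc (0 : ℝ) 1 ×ˢ Icc (0 : ℝ) 1) ≠ ⊤ :=
  (isCompact_Icc.prod isCompact_Icc).measure_lt_top.ne

lemma volume_unitCell_ne_top : volume unitCell ≠ ⊤ :=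
  measure_congr Icc_prod_Icc_ae_eq_unitCell ▸ volume_Icc_prod_Icc_ne_top

lemma setIntegral_unitCell_prod_univ_eq_univ_prod_unitCell {Θ E : Type*} [MeasurableSpace Θ]
    [AddAction (ℤ × ℤ) Θ] [MeasurableConstVAdd (ℤ × ℤ) Θ] [NormedAddCommGroup E] [NormedSpace ℝ E]
    (P : Measure Θ) [SFinite P] [VAddInvariantMeasure (ℤ × ℤ) Θ P]
    (ν : Measure ((ℝ × ℝ) × (ℝ × ℝ))) [SFinite ν] [VAddInvariantMeasure (ℤ × ℤ) _ ν]
    {f : Θ × (ℝ × ℝ) × (ℝ × ℝ) → E} (hf : ∀ (γ : ℤ × ℤ) p, f (γ +ᵥ p) = f p) :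
    ∫ p in univ ×ˢ (unitCell ×ˢ univ), f p ∂P.prod ν
      = ∫ p in univ ×ˢ (univ ×ˢ unitCell), f p ∂P.prod ν :=
  IsAddFundamentalDomain.setIntegral_eq (G := ℤ × ℤ)
    (.mk' (MeasurableSet.univ.prod (measurableSet_unitCell.prod .univ)).nullMeasurableSet
      fun p => by simpa using existsUnique_vadd_mem_unitCell p.2.1)
    (.mk'
      (MeasurableSet.univ.prod (MeasurableSet.univ.prod measurableSet_unitCell)).nullMeasurableSet
      fun p => by simpa using existsUnique_vadd_mem_unitCell p.2.2) hf

theorem generalized_trace_cyclicity_bulk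
    (μ0 : Measure (Set.Icc (-1 : ℝ) 1)) [IsProbabilityMeasure μ0]
    (P : Measure DisorderSpace)
    -- `P` is the product measure `⊗_{ℤ²} μ0`, characterized by its cylinder probabilities:
    (hP : ∀ (s : Finset (ℤ × ℤ)) (A : (ℤ × ℤ) → Set (Set.Icc (-1 : ℝ) 1)),
      (∀ i ∈ s, MeasurableSet (A i)) →
        P {ω | ∀ i ∈ s, ω i ∈ A i} = ∏ i ∈ s, μ0 (A i))
    (A B : DisorderSpace → (ℝ × ℝ) → (ℝ × ℝ) → ℂ)
    (hAmeas : Measurable (fun p : DisorderSpace × (ℝ × ℝ) × (ℝ × ℝ) => A p.1 p.2.1 p.2.2))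
    (hBmeas : Measurable (fun p : DisorderSpace × (ℝ × ℝ) × (ℝ × ℝ) => B p.1 p.2.1 p.2.2))
    (C δ : ℝ) (hδ : 0 < δ)
    (hAbound : ∀ ω, ∀ x y : ℝ × ℝ, x ≠ y →
      ‖A ω x y‖ ≤ C * (1 + |Real.log (eNorm2 (x - y))|) * Real.exp (-δ * eNorm2 (x - y)))
    (hBbound : ∀ ω, ∀ x y : ℝ × ℝ, x ≠ y →
      ‖B ω x y‖ ≤ C * (1 + (eNorm2 (x - y))⁻¹) * Real.exp (-δ * eNorm2 (x - y)))
    -- covariance of the product under all lattice shifts: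
    (hcov : ∀ γ : ℤ × ℤ, ∀ ω, ∀ x y : ℝ × ℝ,
      A ω (x - latR2 γ) (y - latR2 γ) * B ω (y - latR2 γ) (x - latR2 γ)
        = A (disorderShift γ ω) x y * B (disorderShift γ ω) y x) :
    (∀ ω, IntegrableOn (fun q : (ℝ × ℝ) × (ℝ × ℝ) => A ω q.1 q.2 * B ω q.2 q.1)
        ((Set.Icc (0:ℝ) 1 ×ˢ Set.Icc (0:ℝ) 1) ×ˢ (Set.univ : Set (ℝ × ℝ)))) ∧
    (∀ ω, IntegrableOn (fun q : (ℝ × ℝ) × (ℝ × ℝ) => B ω q.1 q.2 * A ω q.2 q.1)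
        ((Set.Icc (0:ℝ) 1 ×ˢ Set.Icc (0:ℝ) 1) ×ˢ (Set.univ : Set (ℝ × ℝ)))) ∧
    (∫ ω, (∫ x in (Set.Icc (0:ℝ) 1 ×ˢ Set.Icc (0:ℝ) 1),
        ∫ y : ℝ × ℝ, A ω x y * B ω y x) ∂P)
      = ∫ ω, (∫ x in (Set.Icc (0:ℝ) 1 ×ˢ Set.Icc (0:ℝ) 1),
        ∫ y : ℝ × ℝ, B ω x y * A ω y x) ∂P := by
  obtain rfl : P = Measure.infinitePi fun _ => μ0 :=
    Measure.eq_infinitePi _ fun s t ht => hP s t fun i _ => ht i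
  set K : ℝ × ℝ → ℝ := fun z => C ^ 2 * productKernelBound δ (eNorm2 z)
  have hK : Integrable K :=
    (integrable_comp_eNorm2 (integrableOn_mul_productKernelBound hδ)).const_mul _
  have hAB (ω x y) (hxy : x ≠ y) : ‖A ω x y * B ω y x‖ ≤ K (x - y) :=
    norm_mul_le_productKernelBound (hAbound ω x y hxy)
      (eNorm2_sub_comm x y ▸ hBbound ω y x hxy.symm)
  have hBA (ω x y) (hxy : x ≠ y) : ‖B ω x y * A ω y x‖ ≤ K (x - y) := by
    rw [mul_comm]
    exact norm_mul_le_productKernelBound (eNorm2_sub_comm x y ▸ hAbound ω y x hxy.symm)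
      (hBbound ω x y hxy)
  have hABm := stronglyMeasurable_mul_apply_swap hAmeas hBmeas
  have hBAm := stronglyMeasurable_mul_apply_swap hBmeas hAmeas
  refine ⟨integrableOn_prod_univ_of_norm_le_comp_sub hABm hK volume_Icc_prod_Icc_ne_top hAB,
    integrableOn_prod_univ_of_norm_le_comp_sub hBAm hK volume_Icc_prod_Icc_ne_top hBA, ?_⟩
  simp only [setIntegral_Icc_prod_Icc_eq_unitCell]
  rw [integral_setIntegral_integral_eq_setIntegral_prod hABm hK volume_unitCell_ne_top hAB,
    integral_setIntegral_integral_eq_setIntegral_prod hBAm hK volume_unitCell_ne_top hBA,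
    setIntegral_unitCell_prod_univ_eq_univ_prod_unitCell _ _ ?_,
    setIntegral_univ_prod_univ_prod_eq_swap]
  · simp only [mul_comm]
  · intro γ p
    have h := hcov γ p.1 (latR2 γ + p.2.1) (latR2 γ + p.2.2)
    simp only [add_sub_cancel_left] at h
    exact h.symm

end
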